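/- Let Ŵ whiten M̂₂ and let D be the diagonal matrix of eigenvalues of Ŵᵀ M₂ Ŵ with eigenvector matrix A (so Ŵᵀ M₂ Ŵ = A D Aᵀ). Then ‖I − D‖₂ ≤ ‖Ŵ‖₂² · ‖M₂ − M̂₂‖₂, and hence ‖I − D‖₂ ≤ (2/σ_K(M₂)) ‖M₂ − M̂₂‖₂ when ‖M₂ − M̂₂‖₂ ≤ σ_K(M₂)/2. -/

import Mathlib

open Matrix Finset

noncomputable def opNorm {m n : Type*} [Fintype m] [Fintype n] [DecidableEq n]
    (A : Matrix m n ℝ) : ℝ :=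
  ‖(Matrix.toEuclideanLin A).toContinuousLinearMap‖

/-! Conjugating by the orthogonal `A` turns `1 - diagonal d` into `W'ᵀ (N₂ - M₂) W'`, whence the
first bound. For the second, `W'` is an orthonormal `U'` times `diag (σ'ₖ ^ (-1/2))`, so
`‖W'‖² ≤ 1 / σ'_K`, and Weyl's inequality `σ'_K ≥ σ_K - ‖M₂ - N₂‖ ≥ σ_K / 2` concludes. Weyl's
inequality is the Courant–Fischer argument: some unit vector `v` lies in the span of the top `K`
eigenvectors of `M₂` and is orthogonal to the top `K - 1` eigenvectors of `N₂`, so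
`σ_K ≤ vᵀ M₂ v ≤ vᵀ N₂ v + ‖M₂ - N₂‖ ≤ σ'_K + ‖M₂ - N₂‖`. -/

open scoped Matrix.Norms.L2Operator

theorem pi_norm_inv_sqrt_le {ι : Type*} [Fintype ι] {τ : ι → ℝ} {c : ℝ} (hc : 0 < c)
    (hτ : ∀ j, c ≤ τ j) : ‖fun j => (√(τ j))⁻¹‖ ≤ (√c)⁻¹ :=
  (pi_norm_le_iff_of_nonneg (by positivity)).mpr fun j => by
    rw [Real.norm_eq_abs, abs_of_nonneg (by positivity)]
    exact inv_anti₀ (Real.sqrt_pos.mpr hc) (Real.sqrt_le_sqrt (hτ j))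

theorem mul_sum_sq_le_sum_mul_sq_of_antitone {ι : Type*} [Fintype ι] [LinearOrder ι] {σ : ι → ℝ}
    (hσ : Antitone σ) {w : ι → ℝ} {k : ι} (hw : ∀ j, k < j → w j = 0) :
    σ k * ∑ i, w i ^ 2 ≤ ∑ i, σ i * w i ^ 2 := by
  rw [Finset.mul_sum]
  refine Finset.sum_le_sum fun i _ => ?_
  rcases le_or_gt i k with hik | hki
  · exact mul_le_mul_of_nonneg_right (hσ hik) (sq_nonneg _)
  · simp [hw i hki]

theorem sum_mul_sq_le_mul_sum_sq_of_antitone {ι : Type*} [Fintype ι] [LinearOrder ι] {σ : ι → ℝ}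
    (hσ : Antitone σ) {w : ι → ℝ} {k : ι} (hw : ∀ j, j < k → w j = 0) :
    ∑ i, σ i * w i ^ 2 ≤ σ k * ∑ i, w i ^ 2 := by
  rw [Finset.mul_sum]
  refine Finset.sum_le_sum fun i _ => ?_
  rcases lt_or_ge i k with hik | hki
  · simp [hw i hik]
  · exact mul_le_mul_of_nonneg_right (hσ hki) (sq_nonneg _)

namespace Matrix

theorem transpose_mul_self_submatrix_id {m n : Type*} [Fintype m] [DecidableEq m] [DecidableEq n]
    {Q : Matrix m m ℝ} (hQ : Qᵀ * Q = 1) {e : n → m} (he : Function.Injective e) :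
    (Q.submatrix id e)ᵀ * Q.submatrix id e = 1 := by
  rw [transpose_submatrix, ← submatrix_mul _ _ _ _ _ Function.bijective_id, hQ,
    submatrix_one e he]

variable {m n : Type*} [Fintype m] [Fintype n] [DecidableEq n]

theorem opNorm_eq_l2_opNorm (A : Matrix m n ℝ) : opNorm A = ‖A‖ := rfl

theorem l2_opNorm_le_one_of_transpose_mul_self (U : Matrix m n ℝ) (hU : Uᵀ * U = 1) :
    ‖U‖ ≤ 1 := by
  have h : ‖U‖ * ‖U‖ ≤ 1 := by
    rw [← l2_opNorm_conjTranspose_mul_self, conjTranspose_eq_transpose_of_trivial, hU,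
      ← diagonal_one, l2_opNorm_diagonal]
    exact (pi_norm_le_iff_of_nonneg zero_le_one).mpr fun _ => norm_one.le
  nlinarith [norm_nonneg U]

theorem l2_opNorm_mul_diagonal_le (U : Matrix m n ℝ) (hU : Uᵀ * U = 1) (s : n → ℝ) :
    ‖U * diagonal s‖ ≤ ‖s‖ :=
  calc ‖U * diagonal s‖ ≤ ‖U‖ * ‖s‖ := by
        simpa only [l2_opNorm_diagonal] using l2_opNorm_mul U (diagonal s)
    _ ≤ ‖s‖ := mul_le_of_le_one_left (norm_nonneg s) (U.l2_opNorm_le_one_of_transpose_mul_self hU)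

variable [DecidableEq m]

theorem l2_opNorm_transpose (A : Matrix m n ℝ) : ‖Aᵀ‖ = ‖A‖ :=
  l2_opNorm_conjTranspose A

theorem l2_opNorm_transpose_mul_mul_le (B : Matrix m n ℝ) (E : Matrix m m ℝ) :
    ‖Bᵀ * E * B‖ ≤ ‖B‖ ^ 2 * ‖E‖ :=
  calc ‖Bᵀ * E * B‖ ≤ ‖Bᵀ‖ * ‖E‖ * ‖B‖ :=
        (l2_opNorm_mul _ _).trans (by gcongr; exact l2_opNorm_mul _ _)
    _ = ‖B‖ ^ 2 * ‖E‖ := by rw [l2_opNorm_transpose]; ring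

theorem abs_dotProduct_mulVec_le (E : Matrix n n ℝ) (v : n → ℝ) :
    |v ⬝ᵥ E *ᵥ v| ≤ ‖E‖ * (v ⬝ᵥ v) := by
  set x : EuclideanSpace ℝ n := WithLp.toLp 2 v
  have hx : ‖x‖ ^ 2 = v ⬝ᵥ v := by
    rw [← real_inner_self_eq_norm_sq]
    simpa using inner_toEuclideanCLM (1 : Matrix n n ℝ) x x
  rw [← inner_toEuclideanCLM E x x, ← hx]
  calc _ ≤ ‖x‖ * ‖toEuclideanCLM (𝕜 := ℝ) E x‖ := abs_real_inner_le_norm _ _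
    _ ≤ ‖x‖ * (‖E‖ * ‖x‖) := by
        gcongr; exact (toEuclideanCLM (𝕜 := ℝ) E).le_opNorm x
    _ = ‖E‖ * ‖x‖ ^ 2 := by ring

theorem exists_ne_zero_mulVec_eq_zero_above_below [LinearOrder n] (P P' : Matrix n n ℝ) (k : n) :
    ∃ v ≠ 0, (∀ j, k < j → (P *ᵥ v) j = 0) ∧ (∀ j, j < k → (P' *ᵥ v) j = 0) := by
  set R : Matrix n n ℝ := of fun j => if k < j then P j else if j < k then P' j else 0
  have hR : R.det = 0 := det_eq_zero_of_row_eq_zero k fun _ => by simp [R]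
  obtain ⟨v, hv, hRv⟩ := exists_mulVec_eq_zero_iff.mpr hR
  refine ⟨v, hv, fun j hj => ?_, fun j hj => ?_⟩
  · simpa [R, mulVec, hj] using congrFun hRv j
  · simpa [R, mulVec, hj, hj.not_gt] using congrFun hRv j

theorem dotProduct_mulVec_conj_diagonal (Q : Matrix n n ℝ) (σ v : n → ℝ) :
    v ⬝ᵥ (Q * diagonal σ * Qᵀ) *ᵥ v = ∑ i, σ i * (Qᵀ *ᵥ v) i ^ 2 := by
  rw [← mulVec_mulVec, ← mulVec_mulVec, dotProduct_mulVec, ← mulVec_transpose]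
  simp only [dotProduct, mulVec_diagonal]
  exact Finset.sum_congr rfl fun i _ => by ring

theorem dotProduct_self_eq_sum_sq (Q : Matrix n n ℝ) (hQ : Qᵀ * Q = 1) (v : n → ℝ) :
    v ⬝ᵥ v = ∑ i, (Qᵀ *ᵥ v) i ^ 2 := by
  simpa [mul_eq_one_comm.mp hQ] using dotProduct_mulVec_conj_diagonal Q 1 v

theorem sub_l2_opNorm_le_of_eq_conj_diagonal [LinearOrder n] {Q Q' : Matrix n n ℝ}
    (hQ : Qᵀ * Q = 1) (hQ' : Q'ᵀ * Q' = 1) {σ σ' : n → ℝ} (hσ : Antitone σ) (hσ' : Antitone σ')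
    (k : n) : σ k - ‖Q * diagonal σ * Qᵀ - Q' * diagonal σ' * Q'ᵀ‖ ≤ σ' k := by
  obtain ⟨v, hv, hw, hw'⟩ := exists_ne_zero_mulVec_eq_zero_above_below Qᵀ Q'ᵀ k
  have hvv : 0 < v ⬝ᵥ v := by simpa using dotProduct_self_star_pos_iff.mpr hv
  have hM : σ k * (v ⬝ᵥ v) ≤ v ⬝ᵥ (Q * diagonal σ * Qᵀ) *ᵥ v := by
    rw [dotProduct_mulVec_conj_diagonal, dotProduct_self_eq_sum_sq Q hQ]
    exact mul_sum_sq_le_sum_mul_sq_of_antitone hσ hw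
  have hN : v ⬝ᵥ (Q' * diagonal σ' * Q'ᵀ) *ᵥ v ≤ σ' k * (v ⬝ᵥ v) := by
    rw [dotProduct_mulVec_conj_diagonal, dotProduct_self_eq_sum_sq Q' hQ']
    exact sum_mul_sq_le_mul_sum_sq_of_antitone hσ' hw'
  have hE := (abs_le.mp <|
    abs_dotProduct_mulVec_le (Q * diagonal σ * Qᵀ - Q' * diagonal σ' * Q'ᵀ) v).2
  rw [sub_mulVec, dotProduct_sub] at hE
  refine le_of_mul_le_mul_right ?_ hvv
  linarith

end Matrix

/-- if `Ŵ` whitens `M̂₂` (via its top-K eigendecomposition) and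
`Ŵᵀ M₂ Ŵ = A D Aᵀ` with `A` orthogonal and `D` diagonal, then
`‖I - D‖₂ ≤ ‖Ŵ‖₂² ‖M₂ - M̂₂‖₂`, and hence `‖I - D‖₂ ≤ (2/σ_K(M₂)) ‖M₂ - M̂₂‖₂`
when `‖M₂ - M̂₂‖₂ ≤ σ_K(M₂)/2`. -/
theorem stmt5 (D K : ℕ) (hK : 0 < K) (hKD : K ≤ D)
    (M₂ N₂ : Matrix (Fin D) (Fin D) ℝ)
    (σ : Fin D → ℝ) (Q : Matrix (Fin D) (Fin D) ℝ)
    (hQ : Qᵀ * Q = 1) (hsort : Antitone σ)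
    (hdec : M₂ = Q * Matrix.diagonal σ * Qᵀ)
    (σ' : Fin D → ℝ) (Q' : Matrix (Fin D) (Fin D) ℝ)
    (hQ' : Q'ᵀ * Q' = 1) (hsort' : Antitone σ')
    (hdec' : N₂ = Q' * Matrix.diagonal σ' * Q'ᵀ)
    (hσK : 0 < σ ⟨K - 1, by omega⟩)
    (U' : Matrix (Fin D) (Fin K) ℝ)
    (hU' : U' = Q'.submatrix id (Fin.castLE hKD))
    (W' : Matrix (Fin D) (Fin K) ℝ)
    (hW' : W' = U' * Matrix.diagonal (fun k => (Real.sqrt (σ' (Fin.castLE hKD k)))⁻¹))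
    (hwhiten : W'ᵀ * N₂ * W' = 1)
    (A : Matrix (Fin K) (Fin K) ℝ) (hA : Aᵀ * A = 1)
    (d : Fin K → ℝ)
    (hAD : W'ᵀ * M₂ * W' = A * Matrix.diagonal d * Aᵀ) :
    opNorm ((1 : Matrix (Fin K) (Fin K) ℝ) - Matrix.diagonal d)
      ≤ opNorm W' ^ 2 * opNorm (M₂ - N₂) ∧
    (opNorm (M₂ - N₂) ≤ σ ⟨K - 1, by omega⟩ / 2 →
      opNorm ((1 : Matrix (Fin K) (Fin K) ℝ) - Matrix.diagonal d)
        ≤ (2 / σ ⟨K - 1, by omega⟩) * opNorm (M₂ - N₂)) := by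
  simp only [opNorm_eq_l2_opNorm]
  set κ : Fin D := ⟨K - 1, by omega⟩
  have hX : 1 - diagonal d = Aᵀ * (W'ᵀ * (N₂ - M₂) * W') * A := by
    rw [Matrix.mul_sub, Matrix.sub_mul, hwhiten, hAD]
    simp only [Matrix.mul_sub, Matrix.sub_mul, Matrix.mul_one, ← Matrix.mul_assoc, hA,
      Matrix.one_mul]
    rw [Matrix.mul_assoc _ Aᵀ A, hA, Matrix.mul_one]
  have hpart1 : ‖1 - diagonal d‖ ≤ ‖W'‖ ^ 2 * ‖M₂ - N₂‖ :=
    calc ‖1 - diagonal d‖ ≤ ‖A‖ ^ 2 * ‖W'ᵀ * (N₂ - M₂) * W'‖ :=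
          hX ▸ l2_opNorm_transpose_mul_mul_le _ _
      _ ≤ ‖W'ᵀ * (N₂ - M₂) * W'‖ :=
          mul_le_of_le_one_left (norm_nonneg _)
            (pow_le_one₀ (norm_nonneg A) (A.l2_opNorm_le_one_of_transpose_mul_self hA))
      _ ≤ ‖W'‖ ^ 2 * ‖M₂ - N₂‖ := by
          rw [norm_sub_rev M₂]; exact l2_opNorm_transpose_mul_mul_le _ _
  refine ⟨hpart1, fun hE => ?_⟩
  have hweyl : σ κ - ‖M₂ - N₂‖ ≤ σ' κ := by
    rw [hdec, hdec']; exact sub_l2_opNorm_le_of_eq_conj_diagonal hQ hQ' hsort hsort' κ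
  have hσ'κ : 0 < σ' κ := by linarith
  have hW : ‖W'‖ ≤ (√(σ' κ))⁻¹ := by
    rw [hW', hU']
    refine (l2_opNorm_mul_diagonal_le _
      (transpose_mul_self_submatrix_id hQ' (Fin.castLE_injective hKD)) _).trans
      (pi_norm_inv_sqrt_le hσ'κ fun k => hsort' ?_)
    rw [Fin.le_def, Fin.val_castLE]; exact Nat.le_sub_one_of_lt k.2
  calc ‖1 - diagonal d‖ ≤ ‖W'‖ ^ 2 * ‖M₂ - N₂‖ := hpart1
    _ ≤ (σ' κ)⁻¹ * ‖M₂ - N₂‖ := by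
        gcongr
        calc ‖W'‖ ^ 2 ≤ ((√(σ' κ))⁻¹) ^ 2 := by gcongr
          _ = (σ' κ)⁻¹ := by rw [inv_pow, Real.sq_sqrt hσ'κ.le]
    _ ≤ 2 / σ κ * ‖M₂ - N₂‖ := by
        gcongr
        rw [← inv_div]
        exact inv_anti₀ (by positivity) (by linarith)
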